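/- Let c ∈ ℕ with c ≥ 2, let α ∈ ℂ with α^c ≠ 1, and let n ∈ ℕ₀. Then Σ_{ξ ∈ μ_c, ξ ≠ 1} ℬ_n(α·ξ) = c^{n+1}·ℬ_n(α^c) − ℬ_n(α). (All arguments occurring are different from 1 because α^c ≠ 1, so every twisted Bernoulli number in the formula is defined.) -/

import Mathlib

/-!
For a `c`-th root of unity `ξ`, `1 - x ^ c = (1 - ξ x) (1 + ξ x + ⋯ + (ξ x) ^ (c - 1))`.
Summed over `ξ ∈ μ_c`, the second factor gives `c`, since `∑ ξ, ξ ^ k = 0` for `0 < k < c`;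
hence `∑_{ξ ∈ μ_c} 1 / (1 - ξ x) = c / (1 - x ^ c)` for power series with `x(0) ^ c ≠ 1`.
For `x = α eᵗ` we have `x ^ c = α ^ c e^{ct}`, so the right side is `c` times the generating
series of `ℬ_n(α ^ c)` rescaled by `t ↦ c t`. Comparing coefficients of `tⁿ` and removing the
term `ξ = 1` gives the formula.
-/

/-- The twisted Bernoulli numbers `ℬ_n(ξ)`, defined by
`1/(1 - ξ·exp t) = Σ_{n≥0} ℬ_n(ξ) tⁿ/n!` in `ℂ[[t]]`. -/
noncomputable def twistedBernoulli (ξ : ℂ) (n : ℕ) : ℂ :=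
  (Nat.factorial n : ℂ) *
    PowerSeries.coeff n (1 - PowerSeries.C ξ * PowerSeries.exp ℂ)⁻¹

open Finset

namespace IsPrimitiveRoot

open Polynomial

variable {R : Type*} [CommRing R] [IsDomain R] {ζ : R} {c : ℕ}

theorem sum_nthRootsFinset_one_eq_sum_range {M : Type*} [AddCommMonoid M]
    (hζ : IsPrimitiveRoot ζ c) (f : R → M) :
    ∑ ξ ∈ nthRootsFinset c (1 : R), f ξ = ∑ i ∈ range c, f (ζ ^ i) := by
  classical
  rw [sum_eq_multiset_sum, nthRootsFinset_def, Multiset.toFinset_val,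
    hζ.nthRoots_one_nodup.dedup, hζ.nthRoots_eq (one_pow c), Multiset.map_map,
    sum_eq_multiset_sum]
  simp

theorem sum_nthRootsFinset_pow_eq_zero (hζ : IsPrimitiveRoot ζ c) {k : ℕ} (hk : ¬c ∣ k) :
    ∑ ξ ∈ nthRootsFinset c (1 : R), ξ ^ k = 0 := by
  have hζk : ζ ^ k ≠ 1 := by rwa [Ne, hζ.pow_eq_one_iff_dvd]
  refine eq_zero_of_ne_zero_of_mul_left_eq_zero (sub_ne_zero_of_ne hζk.symm) ?_
  simp_rw [hζ.sum_nthRootsFinset_one_eq_sum_range, ← pow_mul, pow_mul', mul_neg_geom_sum,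
    ← pow_mul', pow_mul, hζ.pow_eq_one, one_pow, sub_self]

theorem sum_nthRootsFinset_geom_sum {A : Type*} [CommRing A] [Algebra R A]
    (hζ : IsPrimitiveRoot ζ c) (x : A) :
    ∑ ξ ∈ nthRootsFinset c (1 : R), ∑ k ∈ range c, (algebraMap R A ξ * x) ^ k = c := by
  simp_rw [mul_pow, ← map_pow]
  rw [sum_comm, sum_eq_single 0]
  · simp [hζ.card_nthRootsFinset]
  · intro k hk hk0
    rw [← sum_mul, ← map_sum, hζ.sum_nthRootsFinset_pow_eq_zero, map_zero, zero_mul]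
    exact Nat.not_dvd_of_pos_of_lt (Nat.pos_of_ne_zero hk0) (mem_range.1 hk)
  · intro h0
    simp [show c = 0 by simpa using h0]

end IsPrimitiveRoot

namespace PowerSeries

open Polynomial (nthRootsFinset mem_nthRootsFinset)

@[simp]
theorem rescale_C {R : Type*} [CommSemiring R] (a r : R) : rescale a (C r) = C r := by
  ext m
  rcases eq_or_ne m 0 with rfl | hm
  · simp [coeff_rescale]
  · simp [coeff_rescale, coeff_C, hm]

@[simp]
theorem constantCoeff_rescale {R : Type*} [CommSemiring R] (a : R) (φ : R⟦X⟧) :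
    constantCoeff (rescale a φ) = constantCoeff φ := by
  rw [← coeff_zero_eq_constantCoeff_apply, coeff_rescale, pow_zero, one_mul,
    coeff_zero_eq_constantCoeff_apply]

variable {K : Type*} [Field K]

theorem rescale_inv (a : K) (φ : K⟦X⟧) : rescale a φ⁻¹ = (rescale a φ)⁻¹ := by
  by_cases h : constantCoeff φ = 0
  · rw [inv_eq_zero.2 h, inv_eq_zero.2 (by rwa [constantCoeff_rescale]), map_zero]
  · rw [eq_inv_iff_mul_eq_one (by rwa [constantCoeff_rescale]), ← map_mul,
      PowerSeries.inv_mul_cancel _ h, map_one]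

theorem sum_nthRootsFinset_inv_one_sub_C_mul {ζ : K} {c : ℕ} (hζ : IsPrimitiveRoot ζ c)
    {f : K⟦X⟧} (hf : constantCoeff f ^ c ≠ 1) :
    ∑ ξ ∈ nthRootsFinset c (1 : K), (1 - C ξ * f)⁻¹ = C (c : K) * (1 - f ^ c)⁻¹ := by
  have hc : 0 < c := Nat.pos_of_ne_zero (by rintro rfl; exact hf (pow_zero _))
  have hfc : constantCoeff (1 - f ^ c) ≠ 0 := by simpa [sub_eq_zero] using hf.symm
  have h_each : ∀ ξ ∈ nthRootsFinset c (1 : K),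
      (1 - C ξ * f)⁻¹ = (∑ k ∈ range c, (C ξ * f) ^ k) * (1 - f ^ c)⁻¹ := by
    intro ξ hξ
    have hξc : ξ ^ c = 1 := (mem_nthRootsFinset hc 1).1 hξ
    have hξf : constantCoeff (1 - C ξ * f) ≠ 0 := by
      intro h
      have hξa : ξ * constantCoeff f = 1 := (sub_eq_zero.1 (by simpa using h)).symm
      exact hf (by simpa [mul_pow, hξc] using congrArg (· ^ c) hξa)
    have hfactor : (1 - C ξ * f) * ∑ k ∈ range c, (C ξ * f) ^ k = 1 - f ^ c := by
      rw [mul_neg_geom_sum, mul_pow, ← map_pow, hξc, map_one, one_mul]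
    rw [eq_mul_inv_iff_mul_eq hfc, ← hfactor, ← mul_assoc, PowerSeries.inv_mul_cancel _ hξf,
      one_mul]
  have hgeom := hζ.sum_nthRootsFinset_geom_sum f
  rw [algebraMap_eq, ← map_natCast C] at hgeom
  rw [sum_congr rfl h_each, ← sum_mul, hgeom]

end PowerSeries

open PowerSeries
open Polynomial (nthRootsFinset one_mem_nthRootsFinset)

theorem sum_twistedBernoulli_mul_nthRoots_general (c : ℕ) (α : ℂ)
    (hα : α ^ c ≠ 1) (n : ℕ) :
    ∑ ξ ∈ (Polynomial.nthRootsFinset c (1 : ℂ)).erase 1, twistedBernoulli (α * ξ) n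
      = (c : ℂ) ^ (n + 1) * twistedBernoulli (α ^ c) n - twistedBernoulli α n := by
  have hc : 0 < c := Nat.pos_of_ne_zero (by rintro rfl; exact hα (pow_zero α))
  have hgf := sum_nthRootsFinset_inv_one_sub_C_mul (Complex.isPrimitiveRoot_exp c hc.ne')
    (f := C α * exp ℂ) (by simpa using hα)
  have hpow : (C α * exp ℂ) ^ c = rescale (c : ℂ) (C (α ^ c) * exp ℂ) := by
    rw [mul_pow, ← map_pow, exp_pow_eq_rescale_exp, map_mul, rescale_C]
  have hsum : ∑ ξ ∈ nthRootsFinset c (1 : ℂ), twistedBernoulli (α * ξ) n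
      = c ^ (n + 1) * twistedBernoulli (α ^ c) n :=
    calc ∑ ξ ∈ nthRootsFinset c (1 : ℂ), twistedBernoulli (α * ξ) n
        = n.factorial *
            coeff n (∑ ξ ∈ nthRootsFinset c (1 : ℂ), (1 - C ξ * (C α * exp ℂ))⁻¹) := by
          simp only [twistedBernoulli, map_sum, mul_sum, map_mul, mul_comm α, mul_assoc]
      _ = n.factorial * coeff n (C (c : ℂ) * rescale (c : ℂ) (1 - C (α ^ c) * exp ℂ)⁻¹) := by
          rw [hgf, hpow, rescale_inv, map_sub, map_one]
      _ = c ^ (n + 1) * twistedBernoulli (α ^ c) n := by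
          rw [coeff_C_mul, coeff_rescale, twistedBernoulli]
          ring
  rw [sum_erase_eq_sub (one_mem_nthRootsFinset hc), hsum, mul_one]

/-- For `α^c ≠ 1`: `Σ_{ξ ∈ μ_c, ξ ≠ 1} ℬ_n(α·ξ) = c^{n+1}·ℬ_n(α^c) − ℬ_n(α)`. -/
theorem sum_twistedBernoulli_mul_nthRoots (c : ℕ) (hc : 2 ≤ c) (α : ℂ)
    (hα : α ^ c ≠ 1) (n : ℕ) :
    ∑ ξ ∈ (Polynomial.nthRootsFinset c (1 : ℂ)).erase 1, twistedBernoulli (α * ξ) n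
      = (c : ℂ) ^ (n + 1) * twistedBernoulli (α ^ c) n - twistedBernoulli α n :=
  sum_twistedBernoulli_mul_nthRoots_general c α hα n
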